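/- For every R ∈ RatFunc ℂ there is a finite set E ⊆ ℂ such that for every z ∈ ℂ \ E, the evaluations satisfy 2z · (𝔉(R))(z²) = R(z) − R(−z). (This identifies the coefficientwise definition of 𝔉 with the formula 𝔉(R)(x) = (R(√x) − R(−√x))/(2√x).) -/

import Mathlib

/-!
The substitutions `X ↦ -X` and `X ↦ X²` are ring endomorphisms of the Laurent series ring that
restrict to the corresponding substitutions on polynomials. Comparing coefficients,
`f(X) - f(-X) = 2X · g(X²)` whenever the coefficients of `g` are the odd coefficients of `f`.
Applied to the expansions of `R = N/D` and `𝔉(R) = P/Q` and cleared of denominators, this becomes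
the polynomial identity `2X · P(X²) · D(X) D(-X) = (N(X) D(-X) - N(-X) D(X)) · Q(X²)`, since
polynomials embed injectively into Laurent series. Evaluating it at any `z` that is not a root of
`D(X) D(-X) Q(X²)` gives the claim.
-/

/-- The `n`-th coefficient of the Laurent expansion at `0` of a rational function. -/
noncomputable def coeffL (R : RatFunc ℂ) (n : ℤ) : ℂ :=
  ((R : LaurentSeries ℂ)).coeff n

open Polynomial HahnSeries
open scoped LaurentSeries

namespace LaurentSeries

variable {R : Type*} [CommRing R]

lemma support_negOnePow_mul_coeff (x : R⸨X⸩) :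
    Function.support (fun n : ℤ => (n.negOnePow : R) * x.coeff n) = x.support := by
  ext n
  simp

def compNegX : R⸨X⸩ →+* R⸨X⸩ where
  toFun x :=
    { coeff n := (n.negOnePow : R) * x.coeff n
      isPWO_support' := (support_negOnePow_mul_coeff x).symm ▸ x.isPWO_support }
  map_one' := by
    ext n
    by_cases hn : n = 0 <;> simp [HahnSeries.coeff_one, hn]
  map_mul' x y := by
    ext n
    simp only [HahnSeries.coeff_mul, Finset.mul_sum]
    refine Finset.sum_congr ?_ fun ij hij => ?_
    · ext ij
      simp only [Finset.mem_antidiagonal, HahnSeries.support, support_negOnePow_mul_coeff]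
    · rw [← (Finset.mem_antidiagonal.1 hij).2.2, Int.negOnePow_add]
      push_cast
      ring
  map_zero' := by ext; simp
  map_add' x y := by ext; simp [mul_add]

@[simp]
lemma coeff_compNegX (x : R⸨X⸩) (n : ℤ) : (compNegX x).coeff n = (n.negOnePow : R) * x.coeff n :=
  rfl

@[simp]
lemma compNegX_single (n : ℤ) (r : R) :
    compNegX (single n r) = single n ((n.negOnePow : R) * r) := by
  ext m
  by_cases hm : m = n <;> simp [hm]

variable (p : ℕ) (hp : 0 < p)

noncomputable def expand : R⸨X⸩ →+* R⸨X⸩ :=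
  embDomainRingHom (AddMonoidHom.mulLeft (p : ℤ)) (mul_right_injective₀ (by positivity))
    fun _ _ => mul_le_mul_iff_right₀ (by positivity)

variable {p hp}

@[simp]
lemma expand_single (n : ℤ) (r : R) : expand p hp (single n r) = single (p * n) r :=
  embDomain_single

lemma coeff_expand_mul (x : R⸨X⸩) (n : ℤ) : (expand p hp x).coeff (p * n) = x.coeff n :=
  embDomain_coeff

lemma coeff_expand_of_not_dvd (x : R⸨X⸩) {n : ℤ} (hn : ¬ (p : ℤ) ∣ n) :
    (expand p hp x).coeff n = 0 :=
  embDomain_of_notMem_range fun ⟨k, hk⟩ => hn ⟨k, hk.symm⟩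

theorem sub_compNegX_eq (f g : R⸨X⸩) (hg : ∀ k, g.coeff k = f.coeff (2 * k + 1)) :
    f - compNegX f = 2 * single 1 1 * expand 2 two_pos g := by
  ext n
  have hshift : (2 * single 1 1 * expand 2 two_pos g).coeff n =
      2 * (expand 2 two_pos g).coeff (n - 1) := by
    rw [← map_ofNat HahnSeries.C 2, C_apply, single_mul_single, zero_add, mul_one,
      ← coeff_single_mul_add, sub_add_cancel]
  rw [hshift, HahnSeries.coeff_sub, coeff_compNegX]
  rcases Int.even_or_odd' n with ⟨k, rfl | rfl⟩
  · rw [coeff_expand_of_not_dvd _ (by omega), Int.negOnePow_two_mul]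
    simp
  · have hcoeff := coeff_expand_mul (hp := two_pos) g k
    rw [Nat.cast_two] at hcoeff
    rw [add_sub_cancel_right, hcoeff, hg, Int.negOnePow_two_mul_add_one]
    push_cast
    ring

lemma algebraMap_comp_neg_X (P : R[X]) :
    algebraMap R[X] R⸨X⸩ (P.comp (-X)) = compNegX (algebraMap R[X] R⸨X⸩ P) := by
  have h : (algebraMap R[X] R⸨X⸩).comp (compRingHom (-X)) =
      compNegX.comp (algebraMap R[X] R⸨X⸩) :=
    Polynomial.ringHom_ext (fun _ => by simp) (by simp)
  exact RingHom.congr_fun h P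

lemma algebraMap_expand (P : R[X]) :
    algebraMap R[X] R⸨X⸩ (Polynomial.expand R p P) = expand p hp (algebraMap R[X] R⸨X⸩ P) := by
  have h : (algebraMap R[X] R⸨X⸩).comp (Polynomial.expand R p).toRingHom =
      (expand p hp).comp (algebraMap R[X] R⸨X⸩) :=
    Polynomial.ringHom_ext (fun _ => by simp) (by simp)
  exact RingHom.congr_fun h P

end LaurentSeries

lemma RatFunc.algebraMap_num_eq_mul {K : Type*} [Field K] (R : RatFunc K) :
    algebraMap K[X] K⸨X⸩ R.num = R * algebraMap K[X] K⸨X⸩ R.denom := by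
  have h : algebraMap K[X] (RatFunc K) R.num = R * algebraMap K[X] (RatFunc K) R.denom :=
    (div_eq_iff (algebraMap_ne_zero R.denom_ne_zero)).1 (num_div_denom R)
  rw [IsScalarTower.algebraMap_apply K[X] (RatFunc K) K⸨X⸩, h, map_mul,
    ← IsScalarTower.algebraMap_apply]

section

open LaurentSeries

variable {K : Type*} [Field K] {R S : RatFunc K}

theorem two_mul_X_mul_expand_num_eq
    (hS : ∀ k, (S : K⸨X⸩).coeff k = (R : K⸨X⸩).coeff (2 * k + 1)) :
    2 * X * Polynomial.expand K 2 S.num * (R.denom * R.denom.comp (-X)) =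
      (R.num * R.denom.comp (-X) - R.num.comp (-X) * R.denom) * Polynomial.expand K 2 S.denom := by
  have hX : algebraMap K[X] K⸨X⸩ X = single 1 1 := by simp
  apply algebraMap_hahnSeries_injective ℤ
  simp only [map_mul, map_sub, map_ofNat, hX, algebraMap_comp_neg_X,
    algebraMap_expand (hp := two_pos), RatFunc.algebraMap_num_eq_mul]
  set D := algebraMap K[X] K⸨X⸩ R.denom
  set Q := algebraMap K[X] K⸨X⸩ S.denom
  linear_combination (-(D * compNegX D * expand 2 two_pos Q)) * sub_compNegX_eq _ _ hS

theorem exists_finset_two_mul_eval_sq_eq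
    (hS : ∀ k, (S : K⸨X⸩).coeff k = (R : K⸨X⸩).coeff (2 * k + 1)) :
    ∃ E : Finset K, ∀ z ∉ E, 2 * z * S.eval (RingHom.id K) (z ^ 2) =
      R.eval (RingHom.id K) z - R.eval (RingHom.id K) (-z) := by
  classical
  set B := R.denom * R.denom.comp (-X) * Polynomial.expand K 2 S.denom
  have hB : B ≠ 0 := by
    simp [B, comp_eq_zero_iff, expand_eq_zero two_pos, R.denom_ne_zero, S.denom_ne_zero]
  refine ⟨B.roots.toFinset, fun z hz => ?_⟩
  have hBz : B.eval z ≠ 0 := fun h => hz (Multiset.mem_toFinset.2 ((mem_roots hB).2 h))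
  simp only [B, eval_mul, eval_comp, eval_neg, eval_X, expand_eval, mul_ne_zero_iff] at hBz
  obtain ⟨⟨hD, hD_neg⟩, hQ⟩ := hBz
  have h := congrArg (eval z) (two_mul_X_mul_expand_num_eq hS)
  simp only [eval_mul, eval_sub, eval_comp, eval_neg, eval_X, expand_eval, eval_ofNat] at h
  simp only [RatFunc.eval, eval₂_id]
  field_simp
  linear_combination h

end

/-- For every rational function `R` there is a finite set `E ⊆ ℂ` outside of which
`2z ⬝ 𝔉(R)(z²) = R(z) − R(−z)`: the coefficientwise definition of `𝔉` agrees with the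
formula `𝔉(R)(x) = (R(√x) − R(−√x))/(2√x)`. -/
theorem stmt_19 (F : RatFunc ℂ → RatFunc ℂ)
    (hF : ∀ R : RatFunc ℂ, ∀ k : ℤ, coeffL (F R) k = coeffL R (2 * k + 1))
    (R : RatFunc ℂ) :
    ∃ E : Finset ℂ, ∀ z : ℂ, z ∉ E →
      2 * z * RatFunc.eval (RingHom.id ℂ) (z ^ 2) (F R) =
        RatFunc.eval (RingHom.id ℂ) z R - RatFunc.eval (RingHom.id ℂ) (-z) R :=
  exists_finset_two_mul_eval_sq_eq (hF R)
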